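/- Let c = (c₁,c₂,c₃,c₄) ∈ ℝ⁴ satisfy c₁ + c₃ ≥ 0 and c₂ + c₄ ≥ 0. Let x₀ ∈ E with x₀ ≠ (0,0), let 0 < r < |x₀|, and let θ : ℝ² → ℝ be a smooth function with θ ≥ 0, θ ≡ 1 on the ball B_{r/2}(x₀), and support contained in the ball B_r(x₀). Then the system AF ≤ f with data fᵢ = θ·cᵢ (i = 1,2,3,4) admits a continuous solution F : E → ℝ². -/

import Mathlib

open Real Set

/-- The closed unit square `E = [0,1] × [0,1]` in `ℝ²`. -/
def E : Set (ℝ × ℝ) := Set.Icc 0 1 ×ˢ Set.Icc 0 1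

/-- `F` solves the system `A F ≤ f` on `E`. -/
def Solves (f1 f2 f3 f4 : ℝ × ℝ → ℝ) (F : ℝ × ℝ → ℝ × ℝ) : Prop :=
  (∀ x ∈ E, x ≠ ((0 : ℝ), (0 : ℝ)) →
    (x.1 ^ 4 / (x.1 ^ 2 + x.2 ^ 2) ^ 2 * (F x).1 + x.2 ^ 4 / (x.1 ^ 2 + x.2 ^ 2) ^ 2 * (F x).2 ≤ f1 x ∧
     x.2 ^ 4 / (x.1 ^ 2 + x.2 ^ 2) ^ 2 * (F x).1 - x.1 ^ 4 / (x.1 ^ 2 + x.2 ^ 2) ^ 2 * (F x).2 ≤ f2 x ∧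
     -(x.1 ^ 4 / (x.1 ^ 2 + x.2 ^ 2) ^ 2) * (F x).1 - x.2 ^ 4 / (x.1 ^ 2 + x.2 ^ 2) ^ 2 * (F x).2 ≤ f3 x ∧
     -(x.2 ^ 4 / (x.1 ^ 2 + x.2 ^ 2) ^ 2) * (F x).1 + x.1 ^ 4 / (x.1 ^ 2 + x.2 ^ 2) ^ 2 * (F x).2 ≤ f4 x)) ∧
  (0 ≤ f1 (0, 0) ∧ 0 ≤ f2 (0, 0) ∧ 0 ≤ f4 (0, 0) ∧ -(10 : ℝ) ^ 6 * (F (0, 0)).1 ≤ f3 (0, 0))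

/-- The open Euclidean ball of radius `s` about `x₀` in `ℝ × ℝ`. -/
def euclBall (x₀ : ℝ × ℝ) (s : ℝ) : Set (ℝ × ℝ) :=
  {x : ℝ × ℝ | Real.sqrt ((x.1 - x₀.1) ^ 2 + (x.2 - x₀.2) ^ 2) < s}

theorem stmt_16 (c1 c2 c3 c4 : ℝ) (h13 : 0 ≤ c1 + c3) (h24 : 0 ≤ c2 + c4)
    (x₀ : ℝ × ℝ) (hx₀ : x₀ ∈ E) (hx₀0 : x₀ ≠ ((0 : ℝ), (0 : ℝ)))
    (r : ℝ) (hr : 0 < r) (hrx : r < Real.sqrt (x₀.1 ^ 2 + x₀.2 ^ 2))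
    (θ : ℝ × ℝ → ℝ) (hθ : ContDiff ℝ (⊤ : ℕ∞) θ) (hθ0 : ∀ x, 0 ≤ θ x)
    (hθ1 : ∀ x ∈ euclBall x₀ (r / 2), θ x = 1)
    (hθsupp : tsupport θ ⊆ euclBall x₀ r) :
    ∃ F : ℝ × ℝ → ℝ × ℝ, ContinuousOn F E ∧
      Solves (fun x => θ x * c1) (fun x => θ x * c2) (fun x => θ x * c3)
        (fun x => θ x * c4) F := by
  set t : ℝ := (c1 - c3) / 2 with htdef
  set s : ℝ := (c2 - c4) / 2 with hsdef
  set N0 : ℝ := Real.sqrt (x₀.1 ^ 2 + x₀.2 ^ 2) with hN0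
  -- θ vanishes near the origin
  have hθz : ∀ x : ℝ × ℝ, Real.sqrt (x.1 ^ 2 + x.2 ^ 2) < N0 - r → θ x = 0 := by
    intro x hx
    apply image_eq_zero_of_notMem_tsupport
    intro hmem
    have hball := hθsupp hmem
    simp only [euclBall, Set.mem_setOf_eq] at hball
    have habs : ∀ a b : ℝ, ‖(⟨a, b⟩ : ℂ)‖ = Real.sqrt (a ^ 2 + b ^ 2) := by
      intro a b
      rw [Complex.norm_def, Complex.normSq_mk]
      ring_nf
    have tri : N0 ≤ Real.sqrt ((x.1 - x₀.1) ^ 2 + (x.2 - x₀.2) ^ 2)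
        + Real.sqrt (x.1 ^ 2 + x.2 ^ 2) := by
      have h := norm_add_le ((⟨x₀.1, x₀.2⟩ : ℂ) - ⟨x.1, x.2⟩) (⟨x.1, x.2⟩ : ℂ)
      have hsub : ((⟨x₀.1, x₀.2⟩ : ℂ) - ⟨x.1, x.2⟩) = (⟨x₀.1 - x.1, x₀.2 - x.2⟩ : ℂ) := by
        apply Complex.ext <;> simp
      rw [sub_add_cancel, hsub, habs, habs, habs] at h
      have heq : Real.sqrt ((x₀.1 - x.1) ^ 2 + (x₀.2 - x.2) ^ 2)
          = Real.sqrt ((x.1 - x₀.1) ^ 2 + (x.2 - x₀.2) ^ 2) := by ring_nf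
      rw [heq] at h
      exact h
    linarith
  classical
  refine ⟨fun x => if x = ((0 : ℝ), (0 : ℝ)) then (0, 0) else
      (θ x * (x.1 ^ 2 + x.2 ^ 2) ^ 2 * (x.1 ^ 4 * t + x.2 ^ 4 * s) / (x.1 ^ 8 + x.2 ^ 8),
       θ x * (x.1 ^ 2 + x.2 ^ 2) ^ 2 * (x.2 ^ 4 * t - x.1 ^ 4 * s) / (x.1 ^ 8 + x.2 ^ 8)),
    ?_, ?_, ?_⟩
  · -- continuity
    intro x hxE
    by_cases h0 : x = ((0 : ℝ), (0 : ℝ))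
    · subst h0
      apply ContinuousAt.continuousWithinAt
      have hN0r : 0 < N0 - r := by linarith
      have hδ : (0 : ℝ) < (N0 - r) / 2 := by linarith
      have hev : (fun y : ℝ × ℝ =>
          (if y = ((0 : ℝ), (0 : ℝ)) then ((0 : ℝ), (0 : ℝ)) else
            (θ y * (y.1 ^ 2 + y.2 ^ 2) ^ 2 * (y.1 ^ 4 * t + y.2 ^ 4 * s) / (y.1 ^ 8 + y.2 ^ 8),
             θ y * (y.1 ^ 2 + y.2 ^ 2) ^ 2 * (y.2 ^ 4 * t - y.1 ^ 4 * s) / (y.1 ^ 8 + y.2 ^ 8))))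
          =ᶠ[nhds ((0 : ℝ), (0 : ℝ))] (fun _ => ((0 : ℝ), (0 : ℝ))) := by
        filter_upwards [Metric.ball_mem_nhds _ hδ] with y hy
        rw [Metric.mem_ball, Prod.dist_eq] at hy
        have h1 : |y.1| < (N0 - r) / 2 := by
          have h' : dist y.1 (0:ℝ) < (N0 - r) / 2 :=
            lt_of_le_of_lt (le_max_left _ _) hy
          simpa [Real.dist_eq] using h'
        have h2 : |y.2| < (N0 - r) / 2 := by
          have h' : dist y.2 (0:ℝ) < (N0 - r) / 2 :=
            lt_of_le_of_lt (le_max_right _ _) hy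
          simpa [Real.dist_eq] using h'
        have hsq : y.1 ^ 2 + y.2 ^ 2 < (N0 - r) ^ 2 := by
          have e1 : y.1 ^ 2 < ((N0 - r) / 2) ^ 2 := by
            rw [← sq_abs]; exact pow_lt_pow_left₀ h1 (abs_nonneg _) (by norm_num)
          have e2 : y.2 ^ 2 < ((N0 - r) / 2) ^ 2 := by
            rw [← sq_abs]; exact pow_lt_pow_left₀ h2 (abs_nonneg _) (by norm_num)
          nlinarith
        have hsqrt : Real.sqrt (y.1 ^ 2 + y.2 ^ 2) < N0 - r :=
          (Real.sqrt_lt' hN0r).2 hsq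
        have hθy : θ y = 0 := hθz y hsqrt
        by_cases hy0 : y = ((0 : ℝ), (0 : ℝ))
        · simp [hy0]
        · simp [hy0, hθy]
      exact hev.continuousAt
    · apply ContinuousAt.continuousWithinAt
      have hθc : Continuous θ := hθ.continuous
      have hne : x.1 ≠ 0 ∨ x.2 ≠ 0 := by
        by_contra h
        push_neg at h
        exact h0 (Prod.ext h.1 h.2)
      have hden : x.1 ^ 8 + x.2 ^ 8 ≠ 0 := by
        rcases hne with h | h
        · positivity
        · positivity
      have hgc : ContinuousAt (fun y : ℝ × ℝ =>
          ((θ y * (y.1 ^ 2 + y.2 ^ 2) ^ 2 * (y.1 ^ 4 * t + y.2 ^ 4 * s) / (y.1 ^ 8 + y.2 ^ 8),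
            θ y * (y.1 ^ 2 + y.2 ^ 2) ^ 2 * (y.2 ^ 4 * t - y.1 ^ 4 * s) / (y.1 ^ 8 + y.2 ^ 8))
            : ℝ × ℝ)) x := by
        apply ContinuousAt.prodMk
        · exact ContinuousAt.div (by fun_prop) (by fun_prop) hden
        · exact ContinuousAt.div (by fun_prop) (by fun_prop) hden
      apply hgc.congr
      have hopen : IsOpen {y : ℝ × ℝ | y ≠ ((0 : ℝ), (0 : ℝ))} := isOpen_ne
      filter_upwards [hopen.mem_nhds h0] with y hy
      rw [if_neg hy]
  · -- the inequalities away from the origin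
    intro x hxE hx0
    have hne : x.1 ≠ 0 ∨ x.2 ≠ 0 := by
      by_contra h
      push_neg at h
      exact hx0 (Prod.ext h.1 h.2)
    have hden : x.1 ^ 8 + x.2 ^ 8 ≠ 0 := by
      rcases hne with h | h
      · positivity
      · positivity
    have hρ : x.1 ^ 2 + x.2 ^ 2 ≠ 0 := by
      rcases hne with h | h
      · positivity
      · positivity
    dsimp only
    rw [if_neg hx0]
    dsimp only
    have hθx := hθ0 x
    have e1 : x.1 ^ 4 / (x.1 ^ 2 + x.2 ^ 2) ^ 2 *
          (θ x * (x.1 ^ 2 + x.2 ^ 2) ^ 2 * (x.1 ^ 4 * t + x.2 ^ 4 * s) / (x.1 ^ 8 + x.2 ^ 8))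
        + x.2 ^ 4 / (x.1 ^ 2 + x.2 ^ 2) ^ 2 *
          (θ x * (x.1 ^ 2 + x.2 ^ 2) ^ 2 * (x.2 ^ 4 * t - x.1 ^ 4 * s) / (x.1 ^ 8 + x.2 ^ 8))
        = θ x * t := by
      field_simp
      ring
    have e2 : x.2 ^ 4 / (x.1 ^ 2 + x.2 ^ 2) ^ 2 *
          (θ x * (x.1 ^ 2 + x.2 ^ 2) ^ 2 * (x.1 ^ 4 * t + x.2 ^ 4 * s) / (x.1 ^ 8 + x.2 ^ 8))
        - x.1 ^ 4 / (x.1 ^ 2 + x.2 ^ 2) ^ 2 *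
          (θ x * (x.1 ^ 2 + x.2 ^ 2) ^ 2 * (x.2 ^ 4 * t - x.1 ^ 4 * s) / (x.1 ^ 8 + x.2 ^ 8))
        = θ x * s := by
      field_simp
      ring
    refine ⟨?_, ?_, ?_, ?_⟩
    · simp only [e1]
      apply mul_le_mul_of_nonneg_left _ hθx
      rw [htdef]; linarith
    · simp only [e2]
      apply mul_le_mul_of_nonneg_left _ hθx
      rw [hsdef]; linarith
    · have : -(x.1 ^ 4 / (x.1 ^ 2 + x.2 ^ 2) ^ 2) *
          (θ x * (x.1 ^ 2 + x.2 ^ 2) ^ 2 * (x.1 ^ 4 * t + x.2 ^ 4 * s) / (x.1 ^ 8 + x.2 ^ 8))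
          - x.2 ^ 4 / (x.1 ^ 2 + x.2 ^ 2) ^ 2 *
          (θ x * (x.1 ^ 2 + x.2 ^ 2) ^ 2 * (x.2 ^ 4 * t - x.1 ^ 4 * s) / (x.1 ^ 8 + x.2 ^ 8))
          = θ x * (-t) := by
        field_simp
        ring
      simp only [this]
      apply mul_le_mul_of_nonneg_left _ hθx
      rw [htdef]; linarith
    · have : -(x.2 ^ 4 / (x.1 ^ 2 + x.2 ^ 2) ^ 2) *
          (θ x * (x.1 ^ 2 + x.2 ^ 2) ^ 2 * (x.1 ^ 4 * t + x.2 ^ 4 * s) / (x.1 ^ 8 + x.2 ^ 8))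
          + x.1 ^ 4 / (x.1 ^ 2 + x.2 ^ 2) ^ 2 *
          (θ x * (x.1 ^ 2 + x.2 ^ 2) ^ 2 * (x.2 ^ 4 * t - x.1 ^ 4 * s) / (x.1 ^ 8 + x.2 ^ 8))
          = θ x * (-s) := by
        field_simp
        ring
      simp only [this]
      apply mul_le_mul_of_nonneg_left _ hθx
      rw [hsdef]; linarith
  · -- the origin conditions
    have hθ00 : θ ((0 : ℝ), (0 : ℝ)) = 0 := by
      apply hθz
      norm_num [Real.sqrt_zero]
      linarith
    have hθ00' : θ (0 : ℝ × ℝ) = 0 := hθ00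
    simp [hθ00, hθ00']
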